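/- arXiv:2601.08582 — 2 statements merged into one kernel-verified Lean document; each statement's English description precedes it below -/
import Mathlib

section
/- For all n ∈ ℤ, the non-symmetric Heckman–Opdam polynomial of type A_1 satisfies E_{n+1}^k(x) = e^x · E_{−n}^k(−x). -/
open Complex Real MeasureTheory intervalIntegral Finset

/-- The dominance-type partial order on `ℤ` used to define the non-symmetric
Heckman–Opdam polynomials of type `A₁`. -/
def hoOrd (j n : ℤ) : Prop := (|j| < |n| ∧ 2 ∣ (|n| - |j|)) ∨ (|j| = |n| ∧ n < j)

instance : ∀ j n : ℤ, Decidable (hoOrd j n) := fun j n => by unfold hoOrd; infer_instance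

lemma ho_key (n j : ℤ) : hoOrd j (-n) ↔ hoOrd (1 - j) (n + 1) := by
  unfold hoOrd
  rcases abs_cases (1 - j) with ⟨h1, _⟩ | ⟨h1, _⟩ <;>
  rcases abs_cases (n + 1) with ⟨h2, _⟩ | ⟨h2, _⟩ <;>
  rcases abs_cases (-n) with ⟨h3, _⟩ | ⟨h3, _⟩ <;>
  rcases abs_cases j with ⟨h4, _⟩ | ⟨h4, _⟩ <;>
  rw [h1, h2, h3, h4] <;> omega

lemma ho_le {j n : ℤ} (h : hoOrd j n) : |j| ≤ |n| := by unfold hoOrd at h; omega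

lemma mem_ho (m j : ℤ) :
    j ∈ (Finset.Icc (-|m|) |m|).filter (fun j => hoOrd j m) ↔ hoOrd j m := by
  simp only [Finset.mem_filter, Finset.mem_Icc, and_iff_right_iff_imp]
  exact fun h => abs_le.mp (ho_le h)

lemma conj_exp (j : ℤ) (x : ℝ) :
    (starRingEnd ℂ) (Complex.exp (Complex.I * (j : ℂ) * x)) =
      Complex.exp (-(Complex.I * (j : ℂ) * x)) := by
  rw [← Complex.exp_conj]
  congr 1
  simp only [map_mul, Complex.conj_I, Complex.conj_ofReal, map_intCast]
  ring

lemma int_exp (m : ℤ) :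
    ∫ x in (-Real.pi)..Real.pi, Complex.exp (Complex.I * (m : ℂ) * x) =
      if m = 0 then (2 * Real.pi : ℂ) else 0 := by
  split_ifs with h
  · subst h
    simp only [Int.cast_zero, mul_zero, zero_mul, Complex.exp_zero]
    simp [sub_neg_eq_add, two_mul]
  · have hc : Complex.I * (m : ℂ) ≠ 0 :=
      mul_ne_zero Complex.I_ne_zero (Int.cast_ne_zero.mpr h)
    rw [integral_exp_mul_complex hc]
    have harg : Complex.I * (m : ℂ) * ((Real.pi : ℝ) : ℂ)
        = Complex.I * (m : ℂ) * ((-Real.pi : ℝ) : ℂ) + (m : ℂ) * (2 * Real.pi * Complex.I) := by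
      push_cast; ring
    rw [harg, Complex.exp_add, Complex.exp_int_mul_two_pi_mul_I, mul_one, sub_self, zero_div]

theorem stmt1 (k : ℝ) (hk : 0 ≤ k) (E : ℤ → ℂ → ℂ) (c : ℤ → ℤ → ℂ)
    (hform : ∀ (n : ℤ) (z : ℂ), E n z = Complex.exp ((n : ℂ) * z) +
      ∑ j ∈ (Finset.Icc (-|n|) |n|).filter (fun j => hoOrd j n),
        c n j * Complex.exp ((j : ℂ) * z))
    (horth : ∀ n j : ℤ, hoOrd j n →
      ∫ x in (-Real.pi)..Real.pi,
        E n (Complex.I * x) * (starRingEnd ℂ) (Complex.exp (Complex.I * (j : ℂ) * x)) *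
          ((|Real.sin x| ^ (2 * k) : ℝ) : ℂ) = 0)
    (heig : ∀ (n : ℤ) (x : ℂ), Complex.exp (-2 * x) ≠ 1 →
      deriv (E n) x + 2 * (k : ℂ) * (E n x - E n (-x)) / (1 - Complex.exp (-2 * x))
          - (k : ℂ) * E n x
        = (if 0 < n then (n : ℂ) + (k : ℂ) else (n : ℂ) - (k : ℂ)) * E n x) :
    ∀ (n : ℤ) (x : ℂ), E (n + 1) x = Complex.exp x * E (-n) (-x) := by
  intro n
  -- weight function
  set w : ℝ → ℝ := fun x => |Real.sin x| ^ (2 * k) with hw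
  have hwc : Continuous w :=
    (Real.continuous_sin.abs).rpow_const (fun x => Or.inr (by positivity))
  have hwnonneg : ∀ x, 0 ≤ w x := fun x => Real.rpow_nonneg (abs_nonneg _) _
  have hweven : ∀ x : ℝ, w (-x) = w x := by
    intro x; simp [hw, Real.sin_neg, abs_neg]
  have hwpos : ∀ x : ℝ, -Real.pi < x → x < Real.pi → x ≠ 0 → 0 < w x := by
    intro x h1 h2 h3
    have : Real.sin x ≠ 0 := fun hs => h3 ((Real.sin_eq_zero_iff_of_lt_of_lt h1 h2).mp hs)
    exact Real.rpow_pos_of_pos (abs_pos.mpr this) _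
  -- index set and coefficients
  set S : Finset ℤ := (Finset.Icc (-|n + 1|) |n + 1|).filter (fun j => hoOrd j (n + 1)) with hS
  set S' : Finset ℤ := (Finset.Icc (-|(-n)|) |(-n)|).filter (fun j => hoOrd j (-n)) with hS'
  have hmemS : ∀ j, j ∈ S ↔ hoOrd j (n + 1) := fun j => mem_ho _ j
  have hmemS' : ∀ j, j ∈ S' ↔ hoOrd j (-n) := fun j => mem_ho _ j
  set a : ℤ → ℂ := fun j => c (n + 1) j - c (-n) (1 - j) with ha
  -- key algebraic identity
  have key : ∀ z : ℂ, E (n + 1) z - Complex.exp z * E (-n) (-z) =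
      ∑ j ∈ S, a j * Complex.exp ((j : ℂ) * z) := by
    intro z
    have e1 : Complex.exp z * Complex.exp (((-n : ℤ) : ℂ) * (-z))
        = Complex.exp (((n + 1 : ℤ) : ℂ) * z) := by
      rw [← Complex.exp_add]; congr 1; push_cast; ring
    have e2 : ∀ j : ℤ, Complex.exp z * (c (-n) j * Complex.exp ((j : ℂ) * (-z)))
        = c (-n) j * Complex.exp (((1 - j : ℤ) : ℂ) * z) := by
      intro j
      rw [mul_comm (Complex.exp z) _, mul_assoc, ← Complex.exp_add]
      congr 2; push_cast; ring
    have reindex : ∑ j ∈ S', c (-n) j * Complex.exp (((1 - j : ℤ) : ℂ) * z)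
        = ∑ j ∈ S, c (-n) (1 - j) * Complex.exp ((j : ℂ) * z) := by
      refine Finset.sum_nbij' (fun j => 1 - j) (fun j => 1 - j) ?_ ?_ ?_ ?_ ?_
      · intro j hj
        exact (hmemS _).mpr ((ho_key n j).mp ((hmemS' j).mp hj))
      · intro j hj
        have h1 : (1 : ℤ) - (1 - j) = j := by ring
        refine (hmemS' _).mpr ((ho_key n (1 - j)).mpr ?_)
        rw [h1]; exact (hmemS j).mp hj
      · intro j _; ring
      · intro j _; ring
      · intro j _
        have h1 : (1 : ℤ) - (1 - j) = j := by ring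
        rw [h1]
    rw [hform (n + 1) z, hform (-n) (-z), mul_add, e1, Finset.mul_sum]
    rw [Finset.sum_congr rfl (fun j _ => e2 j), reindex]
    have hsplit : ∑ j ∈ S, a j * Complex.exp ((j : ℂ) * z)
        = (∑ j ∈ S, c (n + 1) j * Complex.exp ((j : ℂ) * z))
          - ∑ j ∈ S, c (-n) (1 - j) * Complex.exp ((j : ℂ) * z) := by
      rw [← Finset.sum_sub_distrib]
      exact Finset.sum_congr rfl fun j _ => by simp only [ha]; ring
    rw [hsplit]
    ring
  -- the difference function on the real line
  set g : ℝ → ℂ := fun t => ∑ j ∈ S, a j * Complex.exp ((j : ℂ) * (Complex.I * t)) with hg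
  have hgc : Continuous g := by
    refine continuous_finset_sum _ fun j _ => continuous_const.mul ?_
    exact Complex.continuous_exp.comp (by fun_prop)
  have hgE : ∀ t : ℝ, g t =
      E (n + 1) (Complex.I * t) - Complex.exp (Complex.I * t) * E (-n) (-(Complex.I * t)) := by
    intro t; rw [hg]; exact (key (Complex.I * t)).symm
  -- continuity of the E-based integrands
  have hEc : ∀ m : ℤ, Continuous fun x : ℝ => E m (Complex.I * x) := by
    intro m
    have : (fun x : ℝ => E m (Complex.I * x)) = fun x : ℝ =>
        Complex.exp ((m : ℂ) * (Complex.I * x)) +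
          ∑ j ∈ (Finset.Icc (-|m|) |m|).filter (fun j => hoOrd j m),
            c m j * Complex.exp ((j : ℂ) * (Complex.I * x)) :=
      funext fun x => hform m _
    rw [this]
    exact (Complex.continuous_exp.comp (by fun_prop)).add
      (continuous_finset_sum _ fun j _ =>
        continuous_const.mul (Complex.continuous_exp.comp (by fun_prop)))
  have hEc' : Continuous fun x : ℝ => E (-n) (-(Complex.I * x)) := by
    have h := (hEc (-n)).comp continuous_neg
    have heq : (fun x : ℝ => E (-n) (-(Complex.I * x)))
        = (fun x : ℝ => E (-n) (Complex.I * x)) ∘ (fun a => -a) := by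
      funext x; simp only [Function.comp]; congr 1; push_cast; ring
    rw [heq]; exact h
  -- orthogonality of g
  have horthg : ∀ j ∈ S,
      ∫ x in (-Real.pi)..Real.pi,
        g x * Complex.exp (-(Complex.I * (j : ℂ) * x)) * ((w x : ℝ) : ℂ) = 0 := by
    intro j hj
    have hoj : hoOrd j (n + 1) := (hmemS j).mp hj
    -- first term
    have t1 : ∫ x in (-Real.pi)..Real.pi,
        E (n + 1) (Complex.I * x) * Complex.exp (-(Complex.I * (j : ℂ) * x)) * ((w x : ℝ) : ℂ)
          = 0 := by
      have h := horth (n + 1) j hoj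
      simp only [conj_exp] at h
      exact_mod_cast h
    -- second term via x ↦ -x
    have hoj' : hoOrd (1 - j) (-n) := by
      refine (ho_key n (1 - j)).mpr ?_
      have h1 : (1 : ℤ) - (1 - j) = j := by ring
      rw [h1]; exact hoj
    set f : ℝ → ℂ := fun x =>
      E (-n) (Complex.I * x) * Complex.exp (-(Complex.I * ((1 - j : ℤ) : ℂ) * x)) * ((w x : ℝ) : ℂ)
      with hf
    have hf0 : ∫ x in (-Real.pi)..Real.pi, f x = 0 := by
      have h := horth (-n) (1 - j) hoj'
      simp only [conj_exp] at h
      exact h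
    have t2 : ∫ x in (-Real.pi)..Real.pi,
        Complex.exp (Complex.I * x) * E (-n) (-(Complex.I * x)) *
          Complex.exp (-(Complex.I * (j : ℂ) * x)) * ((w x : ℝ) : ℂ) = 0 := by
      have hfx : ∀ x : ℝ,
          Complex.exp (Complex.I * x) * E (-n) (-(Complex.I * x)) *
            Complex.exp (-(Complex.I * (j : ℂ) * x)) * ((w x : ℝ) : ℂ) = f (-x) := by
        intro x
        rw [hf]
        simp only []
        rw [show (Complex.I * ((-x : ℝ) : ℂ)) = -(Complex.I * x) by push_cast; ring]
        rw [show (-(Complex.I * ((1 - j : ℤ) : ℂ) * ((-x : ℝ) : ℂ)))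
            = Complex.I * x + -(Complex.I * (j : ℂ) * x) by push_cast; ring]
        rw [Complex.exp_add, hweven x]
        ring
      rw [intervalIntegral.integral_congr (g := fun x => f (-x)) (fun x _ => hfx x)]
      rw [intervalIntegral.integral_comp_neg, neg_neg]
      exact hf0
    -- combine
    have int1 : IntervalIntegrable (fun x : ℝ =>
        E (n + 1) (Complex.I * x) * Complex.exp (-(Complex.I * (j : ℂ) * x)) * ((w x : ℝ) : ℂ))
        volume (-Real.pi) Real.pi := by
      apply Continuous.intervalIntegrable
      exact ((hEc (n + 1)).mul (Complex.continuous_exp.comp (by fun_prop))).mul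
        (Complex.continuous_ofReal.comp hwc)
    have int2 : IntervalIntegrable (fun x : ℝ =>
        Complex.exp (Complex.I * x) * E (-n) (-(Complex.I * x)) *
          Complex.exp (-(Complex.I * (j : ℂ) * x)) * ((w x : ℝ) : ℂ))
        volume (-Real.pi) Real.pi := by
      apply Continuous.intervalIntegrable
      exact (((Complex.continuous_exp.comp (by fun_prop)).mul hEc').mul
        (Complex.continuous_exp.comp (by fun_prop))).mul (Complex.continuous_ofReal.comp hwc)
    have hsub := intervalIntegral.integral_sub int1 int2
    rw [t1, t2, sub_zero] at hsub
    rw [intervalIntegral.integral_congr (g := fun x =>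
      E (n + 1) (Complex.I * x) * Complex.exp (-(Complex.I * (j : ℂ) * x)) * ((w x : ℝ) : ℂ) -
      Complex.exp (Complex.I * x) * E (-n) (-(Complex.I * x)) *
        Complex.exp (-(Complex.I * (j : ℂ) * x)) * ((w x : ℝ) : ℂ))]
    · exact hsub
    · intro x _
      simp only []
      rw [hgE x]
      ring
  -- conjugate of g
  have hconjg : ∀ x : ℝ, (starRingEnd ℂ) (g x)
      = ∑ j ∈ S, (starRingEnd ℂ) (a j) * Complex.exp (-(Complex.I * (j : ℂ) * x)) := by
    intro x
    rw [hg]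
    simp only [map_sum, map_mul]
    refine Finset.sum_congr rfl fun j _ => ?_
    congr 1
    rw [← Complex.exp_conj]
    congr 1
    simp only [map_mul, Complex.conj_I, Complex.conj_ofReal, map_intCast]
    ring
  -- the weighted L² norm of g vanishes
  have hinner : ∫ x in (-Real.pi)..Real.pi, (Complex.normSq (g x) * w x : ℝ) = 0 := by
    have hC : ∫ x in (-Real.pi)..Real.pi, ((Complex.normSq (g x) * w x : ℝ) : ℂ) = 0 := by
      have hpt : ∀ x : ℝ, ((Complex.normSq (g x) * w x : ℝ) : ℂ)
          = ∑ j ∈ S, (starRingEnd ℂ) (a j) *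
              (g x * Complex.exp (-(Complex.I * (j : ℂ) * x)) * ((w x : ℝ) : ℂ)) := by
        intro x
        rw [Complex.ofReal_mul, ← Complex.mul_conj, hconjg x, Finset.mul_sum, Finset.sum_mul]
        exact Finset.sum_congr rfl fun j _ => by ring
      rw [intervalIntegral.integral_congr (g := fun x => ∑ j ∈ S, (starRingEnd ℂ) (a j) *
            (g x * Complex.exp (-(Complex.I * (j : ℂ) * x)) * ((w x : ℝ) : ℂ)))
          (fun x _ => hpt x)]
      rw [intervalIntegral.integral_finset_sum]
      · refine Finset.sum_eq_zero fun j hj => ?_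
        rw [intervalIntegral.integral_const_mul, horthg j hj, mul_zero]
      · intro j _
        apply Continuous.intervalIntegrable
        exact continuous_const.mul ((hgc.mul
          (Complex.continuous_exp.comp (by fun_prop))).mul (Complex.continuous_ofReal.comp hwc))
    rwa [intervalIntegral.integral_ofReal, Complex.ofReal_eq_zero] at hC
  -- pointwise vanishing of the nonnegative continuous integrand
  have hIcc0 : ∀ x ∈ Set.Icc (-Real.pi) Real.pi, Complex.normSq (g x) * w x = 0 := by
    intro x hx
    by_contra hne
    have hpos : 0 < Complex.normSq (g x) * w x :=
      lt_of_le_of_ne (mul_nonneg (Complex.normSq_nonneg _) (hwnonneg x)) (Ne.symm hne)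
    have hcont : ContinuousOn (fun x => Complex.normSq (g x) * w x)
        (Set.Icc (-Real.pi) Real.pi) :=
      ((Complex.continuous_normSq.comp hgc).mul hwc).continuousOn
    have hlt := intervalIntegral.integral_pos (by linarith [Real.pi_pos]) hcont
      (fun y _ => mul_nonneg (Complex.normSq_nonneg _) (hwnonneg y)) ⟨x, hx, hpos⟩
    rw [hinner] at hlt
    exact lt_irrefl 0 hlt
  -- g vanishes on the whole interval by continuity
  have hgIoo : ∀ x : ℝ, -Real.pi < x → x < Real.pi → x ≠ 0 → g x = 0 := by
    intro x h1 h2 h3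
    have h0 := hIcc0 x ⟨le_of_lt h1, le_of_lt h2⟩
    have hwp := hwpos x h1 h2 h3
    have hns : Complex.normSq (g x) = 0 := by
      rcases mul_eq_zero.mp h0 with h | h
      · exact h
      · exact absurd h (ne_of_gt hwp)
    exact Complex.normSq_eq_zero.mp hns
  have hright : Set.EqOn g 0 (Set.Icc 0 Real.pi) := by
    have hIoo : Set.EqOn g 0 (Set.Ioo 0 Real.pi) := fun x hx => by
      have := hgIoo x (by linarith [hx.1, Real.pi_pos]) hx.2 (ne_of_gt hx.1)
      simpa using this
    have hcl := hIoo.closure hgc continuous_const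
    rwa [closure_Ioo (ne_of_lt Real.pi_pos)] at hcl
  have hleft : Set.EqOn g 0 (Set.Icc (-Real.pi) 0) := by
    have hIoo : Set.EqOn g 0 (Set.Ioo (-Real.pi) 0) := fun x hx => by
      have := hgIoo x hx.1 (by linarith [hx.2, Real.pi_pos]) (ne_of_lt hx.2)
      simpa using this
    have hcl := hIoo.closure hgc continuous_const
    rwa [closure_Ioo (by linarith [Real.pi_pos] : -Real.pi ≠ 0)] at hcl
  have hg0 : ∀ x ∈ Set.Icc (-Real.pi) Real.pi, g x = 0 := by
    intro x hx
    by_cases hx0 : x ≤ 0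
    · simpa using hleft ⟨hx.1, hx0⟩
    · simpa using hright ⟨le_of_not_ge hx0, hx.2⟩
  -- Fourier coefficients vanish
  have hacoeff : ∀ j ∈ S, a j = 0 := by
    intro j hj
    have hzero : ∫ x in (-Real.pi)..Real.pi,
        g x * Complex.exp (-(Complex.I * (j : ℂ) * x)) = 0 := by
      rw [intervalIntegral.integral_congr (g := fun _ => (0 : ℂ))]
      · simp
      · intro x hx
        have hx' : x ∈ Set.Icc (-Real.pi) Real.pi := by
          rwa [Set.uIcc_of_le (by linarith [Real.pi_pos])] at hx
        simp [hg0 x hx']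
    have hcalc : ∫ x in (-Real.pi)..Real.pi,
        g x * Complex.exp (-(Complex.I * (j : ℂ) * x)) = a j * (2 * Real.pi : ℂ) := by
      have hpt : ∀ x : ℝ, g x * Complex.exp (-(Complex.I * (j : ℂ) * x))
          = ∑ m ∈ S, a m * Complex.exp (Complex.I * ((m - j : ℤ) : ℂ) * x) := by
        intro x
        rw [hg, Finset.sum_mul]
        refine Finset.sum_congr rfl fun m _ => ?_
        rw [mul_assoc, ← Complex.exp_add]
        congr 2
        push_cast; ring
      rw [intervalIntegral.integral_congr
          (g := fun x => ∑ m ∈ S, a m * Complex.exp (Complex.I * ((m - j : ℤ) : ℂ) * x))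
          (fun x _ => hpt x)]
      rw [intervalIntegral.integral_finset_sum (fun m _ => by
        apply Continuous.intervalIntegrable
        exact continuous_const.mul (Complex.continuous_exp.comp (by fun_prop)))]
      have hterm : ∀ m ∈ S,
          (∫ x in (-Real.pi)..Real.pi, a m * Complex.exp (Complex.I * ((m - j : ℤ) : ℂ) * x))
            = if m = j then a j * (2 * Real.pi : ℂ) else 0 := by
        intro m _
        rw [intervalIntegral.integral_const_mul, int_exp]
        by_cases hmj : m = j
        · subst hmj
          rw [if_pos (sub_self m), if_pos rfl]
        · rw [if_neg (fun h => hmj (by omega)), if_neg hmj, mul_zero]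
      rw [Finset.sum_congr rfl hterm, Finset.sum_ite_eq' S j (fun _ => a j * (2 * Real.pi : ℂ)),
        if_pos hj]
    have h2pi : (2 * Real.pi : ℂ) ≠ 0 :=
      mul_ne_zero two_ne_zero (Complex.ofReal_ne_zero.mpr Real.pi_ne_zero)
    have : a j * (2 * Real.pi : ℂ) = 0 := by rw [← hcalc]; exact hzero
    exact (mul_eq_zero.mp this).resolve_right h2pi
  -- conclusion
  intro x
  have hx := key x
  rw [Finset.sum_eq_zero (fun j hj => by rw [hacoeff j hj, zero_mul])] at hx
  exact sub_eq_zero.mp hx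
end

section
/- Let k > 0 and 2 − 1/(k+1) < p < 2 + 1/k. Suppose there is a constant A such that γ_n·|sin x|^k·|E_n^k(ix)| ≤ A for all x ∈ [−π,π] and n ∈ ℤ. Then for every f ∈ L^p([−π,π], |sin x|^{2k} dx), the Fourier–Heckman–Opdam coefficients a_n = γ_n² ∫_{−π}^{π} f(x) E_n^k(−ix) |sin x|^{2k} dx satisfy |a_n|/γ_n ≤ C·‖f‖_{L^p(dm_k)} for a constant C independent of n. -/
/-!
The hypothesis at `-x` bounds `|E_n^k(-ix)|` by `(A / γ_n) |sin x|^{-k}`, so by Hölder's inequality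
in `L^p(dm_k)` the coefficient `|a_n| / γ_n` is at most `A ‖f‖_p ‖|sin|^{-k}‖_{p'}`. The last norm
is finite because `‖|sin|^{-k}‖_{p'}^{p'} = ∫ |sin x|^{2k - kp'} dx` and `2k - kp' > -1` is
equivalent to `p > 2 - 1/(k+1)`.
-/

open MeasureTheory Real Set

/-- The measure `dm_k(x) = |sin x|^{2k} dx` on `[-π, π]`. -/
noncomputable def dmk (k : ℝ) : MeasureTheory.Measure ℝ :=
  (MeasureTheory.volume.restrict (Set.Icc (-Real.pi) Real.pi)).withDensity
    (fun x => ENNReal.ofReal (|Real.sin x| ^ (2 * k)))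

section Holder

variable {α 𝕜 : Type*} [MeasurableSpace α] {μ : Measure α} [RCLike 𝕜]

theorem norm_integral_mul_le_of_norm_le_mul {p q : ENNReal} [p.HolderConjugate q]
    {f h : α → 𝕜} {g : α → ℝ} {c : ℝ} (hc : 0 ≤ c) (hf : MemLp f p μ) (hg : MemLp g q μ)
    (hh : ∀ᵐ x ∂μ, ‖h x‖ ≤ c * g x) :
    ‖∫ x, f x * h x ∂μ‖ ≤ c * (eLpNorm f p μ).toReal * (eLpNorm g q μ).toReal := by
  have holder : eLpNorm (fun x => g x • f x) 1 μ ≤ eLpNorm f p μ * eLpNorm g q μ := by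
    simpa using eLpNorm_le_eLpNorm_mul_eLpNorm'_of_norm hf.1 hg.1 (fun a (r : ℝ) => r • a) 1
      (ae_of_all _ fun x => by simp [norm_smul, mul_comm])
  have hfh : eLpNorm (fun x => f x * h x) 1 μ
      ≤ ENNReal.ofReal c * (eLpNorm f p μ * eLpNorm g q μ) := calc
    _ ≤ eLpNorm (c • fun x => g x • f x) 1 μ := by
      refine eLpNorm_mono_ae (hh.mono fun x hx => ?_)
      rw [norm_mul, Pi.smul_apply, norm_smul, norm_smul, mul_comm ‖f x‖, ← mul_assoc]
      gcongr
      exact hx.trans (by rw [Real.norm_of_nonneg hc]; gcongr; exact le_abs_self _)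
    _ ≤ ENNReal.ofReal c * (eLpNorm f p μ * eLpNorm g q μ) := by
      rw [eLpNorm_const_smul, Real.enorm_of_nonneg hc]
      gcongr
  have hfin : ENNReal.ofReal c * (eLpNorm f p μ * eLpNorm g q μ) ≠ ⊤ := by
    finiteness [hf.2, hg.2]
  calc ‖∫ x, f x * h x ∂μ‖ ≤ (eLpNorm (fun x => f x * h x) 1 μ).toReal := by
        rw [eLpNorm_one_eq_lintegral_enorm]
        simpa only [ofReal_norm] using norm_integral_le_lintegral_norm (μ := μ) fun x => f x * h x
    _ ≤ _ := ENNReal.toReal_mono hfin hfh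
    _ = _ := by rw [ENNReal.toReal_mul, ENNReal.toReal_mul, ENNReal.toReal_ofReal hc, mul_assoc]

end Holder

theorem intervalIntegrable_abs_sin_rpow {a : ℝ} (ha : -1 < a) :
    IntervalIntegrable (fun x => |sin x| ^ a) volume (-π) π := by
  rcases le_or_gt 0 a with ha0 | ha0
  · exact (continuous_sin.abs.rpow_const fun _ => Or.inr ha0).intervalIntegrable _ _
  have hmeas : Measurable fun x => |sin x| ^ a := by fun_prop
  -- Jordan's inequality `2x/π ≤ sin x` compares `sin x ^ a` with `x ^ a` near `0`.
  have left : IntervalIntegrable (fun x => |sin x| ^ a) volume 0 (π / 2) := by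
    refine ((intervalIntegral.intervalIntegrable_rpow' ha).const_mul ((2 / π) ^ a)).mono_fun
      hmeas.aestronglyMeasurable ?_
    rw [uIoc_of_le (by positivity)]
    refine (ae_restrict_iff' measurableSet_Ioc).2 (ae_of_all _ fun x ⟨hx0, hx⟩ => ?_)
    have hsin : 0 < sin x := sin_pos_of_pos_of_lt_pi hx0 (by linarith [pi_pos])
    dsimp only
    rw [Real.norm_of_nonneg (by positivity), Real.norm_of_nonneg (by positivity),
      abs_of_pos hsin, ← mul_rpow (by positivity) hx0.le]
    exact rpow_le_rpow_of_nonpos (by positivity) (mul_le_sin hx0.le hx) ha0.le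
  have right : IntervalIntegrable (fun x => |sin x| ^ a) volume (π / 2) π := by
    simpa [sin_pi_sub, sub_half] using (left.comp_sub_left π).symm
  have upper := left.trans right
  refine IntervalIntegrable.trans ?_ upper
  simpa using (IntervalIntegrable.iff_comp_neg (f := fun x => |sin x| ^ a)).1 upper |>.symm

section dmk

variable {k : ℝ}

theorem ae_dmk_mem_Icc_and_sin_ne_zero (hk : 0 < k) :
    ∀ᵐ x ∂dmk k, x ∈ Icc (-π) π ∧ sin x ≠ 0 := by
  rw [dmk, ae_withDensity_iff (by fun_prop), ae_restrict_iff' measurableSet_Icc]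
  refine ae_of_all _ fun x hx hdens => ⟨hx, fun hs => hdens ?_⟩
  simp [hs, zero_rpow (by positivity : 2 * k ≠ 0)]

theorem intervalIntegral_mul_abs_sin_rpow_eq_integral_dmk (k : ℝ) (F : ℝ → ℂ) :
    ∫ x in (-π)..π, F x * ((|sin x| ^ (2 * k) : ℝ) : ℂ) = ∫ x, F x ∂dmk k := by
  rw [dmk, integral_withDensity_eq_integral_toReal_smul (by fun_prop)
    (ae_of_all _ fun _ => ENNReal.ofReal_lt_top), integral_Icc_eq_integral_Ioc,
    intervalIntegral.integral_of_le (by linarith [pi_pos])]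
  refine setIntegral_congr_fun measurableSet_Ioc fun x _ => ?_
  rw [ENNReal.toReal_ofReal (by positivity), Complex.real_smul, mul_comm]

theorem memLp_abs_sin_rpow_neg_dmk {q : ℝ} (hq : 0 < q) (hkq : k * q < 2 * k + 1) :
    MemLp (fun x => |sin x| ^ (-k)) (ENNReal.ofReal q) (dmk k) := by
  rw [← integrable_norm_rpow_iff (Measurable.aestronglyMeasurable (by fun_prop))
      (by simpa using hq) (by simp), dmk,
    integrable_withDensity_iff (by fun_prop) (ae_of_all _ fun _ => ENNReal.ofReal_lt_top),
    ENNReal.toReal_ofReal hq.le]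
  have hint : IntegrableOn (fun x => |sin x| ^ (-k * q + 2 * k)) (Icc (-π) π) :=
    (intervalIntegrable_iff_integrableOn_Icc_of_le (by linarith [pi_pos])).1
      (intervalIntegrable_abs_sin_rpow (by linarith))
  refine hint.mono' (by fun_prop) (ae_of_all _ fun x => ?_)
  rw [ENNReal.toReal_ofReal (by positivity), Real.norm_of_nonneg (by positivity),
    Real.norm_of_nonneg (by positivity), ← rpow_mul (abs_nonneg _)]
  exact le_rpow_add (abs_nonneg _) _ _

end dmk

theorem mul_conjExponent_lt {k p : ℝ} (hk : 0 < k) (hp : 2 - 1 / (k + 1) < p) :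
    k * p.conjExponent < 2 * k + 1 := by
  have hkp : 2 * k + 1 < p * (k + 1) := by
    have e : 2 * k + 1 = (2 - 1 / (k + 1)) * (k + 1) := by field_simp; ring
    rw [e]
    exact mul_lt_mul_of_pos_right hp (by linarith)
  rw [Real.conjExponent, mul_div_assoc', div_lt_iff₀ (by nlinarith)]
  linarith

theorem stmt16_general (k p : ℝ) (hk : 0 < k) (hp1 : 2 - 1 / (k + 1) < p)
    (E : ℤ → ℂ → ℂ) (γ : ℤ → ℝ) (hγpos : ∀ n : ℤ, 0 < γ n) (A : ℝ)
    (hbound : ∀ x ∈ Set.Icc (-Real.pi) Real.pi, ∀ n : ℤ,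
      γ n * |Real.sin x| ^ k * ‖E n (Complex.I * x)‖ ≤ A) :
    ∃ C : ℝ, ∀ f : ℝ → ℂ, MeasureTheory.MemLp f (ENNReal.ofReal p) (dmk k) →
      ∀ n : ℤ,
        ‖((γ n ^ 2 : ℝ) : ℂ) * ∫ x in (-Real.pi)..Real.pi,
            f x * E n (-(Complex.I * x)) * ((|Real.sin x| ^ (2 * k) : ℝ) : ℂ)‖ / γ n
          ≤ C * (MeasureTheory.eLpNorm f (ENNReal.ofReal p) (dmk k)).toReal := by
  have hp : 1 < p := by
    have : 1 / (k + 1) < 1 := by rw [div_lt_one (by linarith)]; linarith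
    linarith
  have hpq := Real.HolderConjugate.conjExponent hp
  have := hpq.ennrealOfReal
  have hA : 0 ≤ A :=
    le_trans (by have := hγpos 0; positivity) (hbound 0 ⟨by linarith [pi_pos], pi_pos.le⟩ 0)
  refine ⟨A * (eLpNorm (fun x => |sin x| ^ (-k)) (ENNReal.ofReal p.conjExponent) (dmk k)).toReal,
    fun f hf n => ?_⟩
  have hγ := hγpos n
  have hE : ∀ᵐ x : ℝ ∂dmk k, ‖E n (-(Complex.I * x))‖ ≤ A / γ n * |sin x| ^ (-k) := by
    filter_upwards [ae_dmk_mem_Icc_and_sin_ne_zero hk] with x ⟨hx, hs⟩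
    have h := hbound (-x) ⟨by linarith [hx.2], by linarith [hx.1]⟩ n
    rw [sin_neg, abs_neg, Complex.ofReal_neg, mul_neg] at h
    rw [rpow_neg (abs_nonneg _), ← div_eq_mul_inv, div_div, le_div_iff₀ (by positivity)]
    linarith
  have hint := norm_integral_mul_le_of_norm_le_mul (div_nonneg hA hγ.le) hf
    (memLp_abs_sin_rpow_neg_dmk hpq.symm.pos (mul_conjExponent_lt hk hp1)) hE
  rw [intervalIntegral_mul_abs_sin_rpow_eq_integral_dmk k fun x => f x * E n (-(Complex.I * x)),
    norm_mul, Complex.norm_real, Real.norm_of_nonneg (by positivity)]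
  calc γ n ^ 2 * ‖∫ x, f x * E n (-(Complex.I * x)) ∂dmk k‖ / γ n
      ≤ γ n ^ 2 * (A / γ n * _ * _) / γ n := by gcongr
    _ = _ := by field_simp

theorem stmt16 (k p : ℝ) (hk : 0 < k) (hp1 : 2 - 1 / (k + 1) < p) (hp2 : p < 2 + 1 / k)
    (E : ℤ → ℂ → ℂ) (γ : ℤ → ℝ) (hγpos : ∀ n : ℤ, 0 < γ n) (A : ℝ)
    (hbound : ∀ x ∈ Set.Icc (-Real.pi) Real.pi, ∀ n : ℤ,
      γ n * |Real.sin x| ^ k * ‖E n (Complex.I * x)‖ ≤ A) :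
    ∃ C : ℝ, ∀ f : ℝ → ℂ, MeasureTheory.MemLp f (ENNReal.ofReal p) (dmk k) →
      ∀ n : ℤ,
        ‖((γ n ^ 2 : ℝ) : ℂ) * ∫ x in (-Real.pi)..Real.pi,
            f x * E n (-(Complex.I * x)) * ((|Real.sin x| ^ (2 * k) : ℝ) : ℂ)‖ / γ n
          ≤ C * (MeasureTheory.eLpNorm f (ENNReal.ofReal p) (dmk k)).toReal :=
  stmt16_general k p hk hp1 E γ hγpos A hbound
end
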